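/- arXiv:math/0606778 — 5 statements merged into one kernel-verified Lean document; each statement's English description precedes it below -/
import Mathlib

section
/- For any probability measure μ, nonnegative measurable function φ with μ[φ²] < ∞, setting φ̃ = (√φ − μ[√φ])², the entropy satisfies H(φ|μ) ≤ H(φ̃|μ) + 2 μ[(√φ − μ[√φ])²] (Rothaus' inequality). -/
/-!
Write `f = √φ`, `a = μ[f]` and `b = Var f`, so that `μ[φ] = a² + b`. The inequality is obtained
by integrating a pointwise bound on `f² log f² - (f - a)² log (f - a)²` whose right-hand side is
`f² log (a² + b) - (f - a)² log b + 2 (f - a)²` plus a multiple of `f - a`, which integrates to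
zero. By homogeneity one may take `a = 1` and `f = 1 + t` with `t ≥ -1`. The multiple of `t` is
chosen so that the weight `(1 + t)² - 4t/3` splits as `t² + (1 + 2t/3)`; the two-term log-sum
inequality then reduces the bound to `rothausGap t ≥ 0`, a one-variable inequality that holds
because `rothausGap` is convex on `[-1, ∞)` with a critical point at `0`, where it vanishes.
-/

open MeasureTheory Real ProbabilityTheory

lemma mul_log_div_eq (x : ℝ) {y : ℝ} (hy : y ≠ 0) :
    x * log (x / y) = x * log x - x * log y := by
  rcases eq_or_ne x 0 with rfl | hx
  · simp
  · rw [log_div hx hy, mul_sub]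

lemma mul_mul_log_mul {c : ℝ} (hc : c ≠ 0) (y : ℝ) :
    c * y * log (c * y) = c * (y * log y) + c * y * log c := by
  rcases eq_or_ne y 0 with rfl | hy
  · simp
  · rw [log_mul hc hy]; ring

lemma mul_log_add_div_add_le {p q u v : ℝ} (hp : 0 ≤ p) (hq : 0 ≤ q) (hu : 0 < u)
    (hv : 0 < v) :
    (p + q) * log ((p + q) / (u + v)) ≤ p * log (p / u) + q * log (q / v) := by
  have huv : 0 < u + v := by positivity
  have h := convexOn_mul_log.2 (Set.mem_Ici.2 (div_nonneg hp hu.le))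
    (Set.mem_Ici.2 (div_nonneg hq hv.le)) (div_nonneg hu.le huv.le) (div_nonneg hv.le huv.le)
    (by rw [← add_div, div_self huv.ne'])
  have hmean : u / (u + v) * (p / u) + v / (u + v) * (q / v) = (p + q) / (u + v) := by
    field_simp
  simp only [smul_eq_mul, hmean] at h
  calc (p + q) * log ((p + q) / (u + v))
      = (u + v) * ((p + q) / (u + v) * log ((p + q) / (u + v))) := by field_simp
    _ ≤ (u + v) * (u / (u + v) * (p / u * log (p / u)) + v / (u + v) * (q / v * log (q / v))) :=
      mul_le_mul_of_nonneg_left h huv.le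
    _ = p * log (p / u) + q * log (q / v) := by field_simp

noncomputable def rothausGap (t : ℝ) : ℝ :=
  (t ^ 2 + 2 / 3 * t + 1) * log (t ^ 2 + 2 / 3 * t + 1) - (1 + 2 / 3 * t) * log (1 + 2 / 3 * t)
    - (1 + t) ^ 2 * log ((1 + t) ^ 2) + 2 * t ^ 2 + 2 * t

noncomputable def rothausGapDeriv (t : ℝ) : ℝ :=
  (2 * t + 2 / 3) * log (t ^ 2 + 2 / 3 * t + 1) - 2 / 3 * log (1 + 2 / 3 * t)
    - 2 * (1 + t) * log ((1 + t) ^ 2) + 4 * t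

noncomputable def rothausGapDeriv2 (t : ℝ) : ℝ :=
  2 * log (t ^ 2 + 2 / 3 * t + 1) + (2 * t + 2 / 3) ^ 2 / (t ^ 2 + 2 / 3 * t + 1)
    - 4 / 9 / (1 + 2 / 3 * t) - 2 * log ((1 + t) ^ 2)

section
variable {t : ℝ}

private lemma hasDerivAt_quadratic :
    HasDerivAt (fun u : ℝ => u ^ 2 + 2 / 3 * u + 1) (2 * t + 2 / 3) t :=
  (((hasDerivAt_pow 2 t).add ((hasDerivAt_id t).const_mul (2 / 3 : ℝ))).add_const 1).congr_deriv
    (by norm_num)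

private lemma hasDerivAt_linear :
    HasDerivAt (fun u : ℝ => 1 + 2 / 3 * u) (2 / 3) t := by
  simpa using ((hasDerivAt_id t).const_mul (2 / 3 : ℝ)).const_add 1

private lemma hasDerivAt_one_add_sq : HasDerivAt (fun u : ℝ => (1 + u) ^ 2) (2 * (1 + t)) t := by
  simpa using ((hasDerivAt_id t).const_add 1).fun_pow 2

lemma hasDerivAt_rothausGap (ht : -1 < t) : HasDerivAt rothausGap (rothausGapDeriv t) t := by
  have hA : t ^ 2 + 2 / 3 * t + 1 ≠ 0 := by nlinarith [sq_nonneg (t + 1 / 3)]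
  have hs : 1 + 2 / 3 * t ≠ 0 := (by linarith : 0 < 1 + 2 / 3 * t).ne'
  have hT : (1 + t) ^ 2 ≠ 0 := pow_ne_zero 2 (by linarith : 0 < 1 + t).ne'
  have := (((((hasDerivAt_mul_log hA).comp t hasDerivAt_quadratic).sub
    ((hasDerivAt_mul_log hs).comp t hasDerivAt_linear)).sub
    ((hasDerivAt_mul_log hT).comp t hasDerivAt_one_add_sq)).add
    ((hasDerivAt_pow 2 t).const_mul 2)).add ((hasDerivAt_id t).const_mul 2)
  refine this.congr_deriv ?_
  simp only [log_pow, Nat.cast_ofNat, Nat.add_one_sub_one, pow_one, mul_one, rothausGapDeriv]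
  ring

lemma hasDerivAt_rothausGapDeriv (ht : -1 < t) :
    HasDerivAt rothausGapDeriv (rothausGapDeriv2 t) t := by
  have hA : t ^ 2 + 2 / 3 * t + 1 ≠ 0 := by nlinarith [sq_nonneg (t + 1 / 3)]
  have hs : 1 + 2 / 3 * t ≠ 0 := (by linarith : 0 < 1 + 2 / 3 * t).ne'
  have hT1 : 1 + t ≠ 0 := (by linarith : 0 < 1 + t).ne'
  have hT : (1 + t) ^ 2 ≠ 0 := pow_ne_zero 2 hT1
  have := (((((hasDerivAt_id t).const_mul 2).add_const (2 / 3 : ℝ)).mul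
    ((hasDerivAt_log hA).comp t hasDerivAt_quadratic)).sub
    (((hasDerivAt_log hs).comp t hasDerivAt_linear).const_mul (2 / 3 : ℝ))).sub
    ((((hasDerivAt_id t).const_add 1).const_mul 2).mul
      ((hasDerivAt_log hT).comp t hasDerivAt_one_add_sq)) |>.add ((hasDerivAt_id t).const_mul 4)
  refine this.congr_deriv ?_
  simp only [Function.comp_apply, id_eq, log_pow, Nat.cast_ofNat, mul_one, rothausGapDeriv2]
  field_simp
  ring

lemma rothausGapDeriv2_nonneg (ht : -1 < t) : 0 ≤ rothausGapDeriv2 t := by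
  have hA : 0 < t ^ 2 + 2 / 3 * t + 1 := by nlinarith [sq_nonneg (t + 1 / 3)]
  have hs : 0 < 1 + 2 / 3 * t := by linarith
  have hT : 0 < (1 + t) ^ 2 := pow_pos (by linarith) 2
  have hlog : 1 - (1 + t) ^ 2 / (t ^ 2 + 2 / 3 * t + 1)
      ≤ log (t ^ 2 + 2 / 3 * t + 1) - log ((1 + t) ^ 2) := by
    rw [← log_div hA.ne' hT.ne']
    simpa using one_sub_inv_le_log_of_pos (div_pos hA hT)
  have hpoly : 4 / 9 / (1 + 2 / 3 * t) ≤ (4 * t ^ 2 + 4 / 9) / (t ^ 2 + 2 / 3 * t + 1) := by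
    rw [div_le_div_iff₀ hs hA]
    nlinarith [mul_nonneg (sq_nonneg t) (by linarith : 0 ≤ 3 * t + 4)]
  have hsum : 2 * (1 - (1 + t) ^ 2 / (t ^ 2 + 2 / 3 * t + 1))
      + (2 * t + 2 / 3) ^ 2 / (t ^ 2 + 2 / 3 * t + 1)
      = (4 * t ^ 2 + 4 / 9) / (t ^ 2 + 2 / 3 * t + 1) := by
    rw [show 4 * t ^ 2 + 4 / 9
        = 2 * (t ^ 2 + 2 / 3 * t + 1) - 2 * (1 + t) ^ 2 + (2 * t + 2 / 3) ^ 2 by ring,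
      add_div, sub_div, mul_div_assoc, mul_div_assoc, div_self hA.ne']
    ring
  unfold rothausGapDeriv2
  linarith

lemma convexOn_rothausGap : ConvexOn ℝ (Set.Ici (-1)) rothausGap := by
  have hcont : Continuous rothausGap := by
    unfold rothausGap; fun_prop
  refine convexOn_of_hasDerivWithinAt2_nonneg (f' := rothausGapDeriv) (f'' := rothausGapDeriv2)
    (convex_Ici _) hcont.continuousOn
    (fun x hx => ?_) (fun x hx => ?_) (fun x hx => ?_)
  all_goals rw [interior_Ici] at hx
  · exact (hasDerivAt_rothausGap hx).hasDerivWithinAt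
  · exact (hasDerivAt_rothausGapDeriv hx).hasDerivWithinAt
  · exact rothausGapDeriv2_nonneg hx

lemma ConvexOn.isMinOn_of_hasDerivAt_eq_zero {S : Set ℝ} {f : ℝ → ℝ} {x : ℝ}
    (hf : ConvexOn ℝ S f) (hx : x ∈ interior S) (hf' : HasDerivAt f 0 x) : IsMinOn f S x :=
  hf.isMinOn_of_rightDeriv_eq_zero hx
    (hf'.hasDerivWithinAt.derivWithin (uniqueDiffWithinAt_Ioi x))

lemma rothausGap_nonneg (ht : -1 ≤ t) : 0 ≤ rothausGap t := by
  have hmin : IsMinOn rothausGap (Set.Ici (-1)) 0 :=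
    convexOn_rothausGap.isMinOn_of_hasDerivAt_eq_zero (by norm_num)
      (by simpa [rothausGapDeriv] using hasDerivAt_rothausGap (t := 0) (by norm_num))
  simpa [rothausGap] using hmin (Set.mem_Ici.2 ht)

end

lemma rothaus_pointwise_normalized {β t : ℝ} (hβ : 0 < β) (ht : -1 ≤ t) :
    (1 + t) ^ 2 * log ((1 + t) ^ 2) - t ^ 2 * log (t ^ 2)
      ≤ (1 + t) ^ 2 * log (1 + β) - t ^ 2 * log β + 2 * t ^ 2
        + (2 - 4 / 3 * log (1 + β)) * t := by
  have hs : 0 < 1 + 2 / 3 * t := by linarith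
  have hlogsum := mul_log_add_div_add_le (sq_nonneg t) hs.le hβ one_pos
  rw [mul_log_div_eq _ hβ.ne', mul_log_div_eq _ (by positivity), div_one, add_comm β 1,
    show t ^ 2 + (1 + 2 / 3 * t) = t ^ 2 + 2 / 3 * t + 1 by ring] at hlogsum
  have hgap := rothausGap_nonneg ht
  unfold rothausGap at hgap
  linear_combination hlogsum + hgap

lemma rothaus_pointwise_of_pos {a b : ℝ} (ha : 0 < a) (hb : 0 < b) {x : ℝ} (hx : 0 ≤ x) :
    x ^ 2 * log (x ^ 2) - (x - a) ^ 2 * log ((x - a) ^ 2)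
      ≤ x ^ 2 * log (a ^ 2 + b) - (x - a) ^ 2 * log b + 2 * (x - a) ^ 2
        + a * (2 - 4 / 3 * log (1 + b / a ^ 2)) * (x - a) := by
  have ha2 : a ^ 2 ≠ 0 := by positivity
  obtain ⟨β, hβ, rfl⟩ : ∃ β, 0 < β ∧ b = a ^ 2 * β :=
    ⟨b / a ^ 2, by positivity, by field_simp⟩
  obtain ⟨t, ht, rfl⟩ : ∃ t, -1 ≤ t ∧ x = a * (1 + t) :=
    ⟨x / a - 1, by linarith [div_nonneg hx ha.le], by field_simp; ring⟩
  have h := rothaus_pointwise_normalized hβ ht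
  rw [show a * (1 + t) - a = a * t by ring, mul_pow, mul_pow, mul_mul_log_mul ha2,
    mul_mul_log_mul ha2, show a ^ 2 + a ^ 2 * β = a ^ 2 * (1 + β) by ring,
    log_mul ha2 (by positivity), log_mul ha2 hβ.ne', mul_div_cancel_left₀ _ ha2]
  linear_combination a ^ 2 * h

lemma exists_rothaus_pointwise {a b : ℝ} (ha : 0 ≤ a) (hb : 0 ≤ b) :
    ∃ κ : ℝ, ∀ x, 0 ≤ x → (b = 0 → x = a) →
      x ^ 2 * log (x ^ 2) - (x - a) ^ 2 * log ((x - a) ^ 2)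
        ≤ x ^ 2 * log (a ^ 2 + b) - (x - a) ^ 2 * log b + 2 * (x - a) ^ 2 + κ * (x - a) := by
  rcases hb.eq_or_lt with rfl | hb
  · exact ⟨0, fun x _ hxa => by simp [hxa rfl]⟩
  rcases ha.eq_or_lt with rfl | ha
  · refine ⟨0, fun x _ _ => ?_⟩
    simp only [sub_zero, sub_self, ne_eq, OfNat.ofNat_ne_zero, not_false_eq_true, zero_pow,
      zero_add, zero_mul, add_zero]
    positivity
  exact ⟨_, fun x hx _ => rothaus_pointwise_of_pos ha hb hx⟩

lemma abs_mul_log_le_sq_add_one {x : ℝ} (hx : 0 ≤ x) : |x * log x| ≤ x ^ 2 + 1 := by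
  have h1 := self_sub_one_le_mul_log hx
  have h2 : x * log x ≤ x * (x - 1) := by
    rcases hx.eq_or_lt with rfl | hx
    · simp
    · exact mul_le_mul_of_nonneg_left (log_le_sub_one_of_pos hx) hx.le
  rw [abs_le]
  constructor <;> nlinarith

section
variable {X : Type*} [MeasurableSpace X]

lemma MeasureTheory.Integrable.mul_log {μ : Measure X} [IsFiniteMeasure μ] {f : X → ℝ}
    (hf : AEStronglyMeasurable f μ) (hf0 : ∀ x, 0 ≤ f x)
    (hf2 : Integrable (fun x => f x ^ 2) μ) : Integrable (fun x => f x * log (f x)) μ :=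
  (hf2.add (integrable_const 1)).mono' (continuous_mul_log.comp_aestronglyMeasurable hf)
    (ae_of_all _ fun x => abs_mul_log_le_sq_add_one (hf0 x))

noncomputable def entropy (μ : Measure X) (g : X → ℝ) : ℝ :=
  ∫ x, g x * log (g x) ∂μ - (∫ x, g x ∂μ) * log (∫ x, g x ∂μ)

theorem entropy_sq_le_entropy_sq_sub_integral_add_two_mul_variance (μ : Measure X)
    [IsProbabilityMeasure μ] {f : X → ℝ} (hf0 : ∀ x, 0 ≤ f x)
    (hfm : AEStronglyMeasurable f μ) (hf2 : MemLp (fun x => f x ^ 2) 2 μ) :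
    entropy μ (fun x => f x ^ 2)
      ≤ entropy μ (fun x => (f x - ∫ y, f y ∂μ) ^ 2) + 2 * Var[f; μ] := by
  have hf1 : Integrable (fun x => f x ^ 2) μ := hf2.integrable one_le_two
  have hfL2 : MemLp f 2 μ := (memLp_two_iff_integrable_sq hfm).2 hf1
  have hIf2 : ∫ x, f x ^ 2 ∂μ = (∫ x, f x ∂μ) ^ 2 + Var[f; μ] := by
    rw [variance_eq_sub hfL2]
    simp only [Pi.pow_apply]
    ring
  set a := ∫ x, f x ∂μ
  set b := Var[f; μ]
  have hb : ∫ x, (f x - a) ^ 2 ∂μ = b := (variance_eq_integral hfm.aemeasurable).symm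
  have hg2L2 : MemLp (fun x => (f x - a) ^ 2) 2 μ := by
    have : (fun x => (f x - a) ^ 2) = fun x => f x ^ 2 - 2 * a * f x + a ^ 2 := by
      funext x; ring
    rw [this]
    exact (hf2.sub (hfL2.const_mul _)).add (memLp_const _)
  have hg2 : Integrable (fun x => (f x - a) ^ 2) μ := hg2L2.integrable one_le_two
  obtain ⟨κ, hκ⟩ :=
    exists_rothaus_pointwise (a := a) (b := b) (integral_nonneg hf0) (variance_nonneg f μ)
  have hdeg : ∀ᵐ x ∂μ, b = 0 → f x = a := by
    rcases eq_or_ne b 0 with hb0 | hb0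
    · filter_upwards [ae_eq_integral_of_variance_eq_zero hfL2 hb0] with x hx _ using hx
    · exact ae_of_all _ fun x h => absurd h hb0
  have hΦ := Integrable.mul_log hf2.1 (fun x => sq_nonneg (f x)) hf2.integrable_sq
  have hΨ := Integrable.mul_log hg2L2.1 (fun x => sq_nonneg (f x - a)) hg2L2.integrable_sq
  have h1 := hf1.mul_const (log (a ^ 2 + b))
  have h2 := hg2.mul_const (log b)
  have h3 := hg2.const_mul 2
  have h4 := ((hfL2.integrable one_le_two).sub (integrable_const a)).const_mul κ
  have hpt := integral_mono_ae (hΦ.sub hΨ) (((h1.sub h2).add h3).add h4)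
    (by filter_upwards [hdeg] with x hx using hκ (f x) (hf0 x) hx)
  rw [integral_sub' hΦ hΨ, integral_add' ((h1.sub h2).add h3) h4, integral_add' (h1.sub h2) h3,
    integral_sub' h1 h2] at hpt
  rw [integral_mul_const, integral_mul_const, integral_const_mul, integral_const_mul,
    integral_sub' (hfL2.integrable one_le_two) (integrable_const a), integral_const,
    probReal_univ, one_smul, sub_self, mul_zero, add_zero, hIf2, hb] at hpt
  simp only [entropy, hIf2, hb]
  linarith

end

theorem stmt1_general {X : Type*} [MeasurableSpace X]
    (μ : Measure X) [IsProbabilityMeasure μ]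
    (φ : X → ℝ) (hφ0 : ∀ x, 0 ≤ φ x)
    (hφ2 : Integrable (fun x => (φ x) ^ 2) μ) :
    (∫ x, φ x * log (φ x) ∂μ) - (∫ x, φ x ∂μ) * log (∫ x, φ x ∂μ)
      ≤ ((∫ x, (Real.sqrt (φ x) - ∫ y, Real.sqrt (φ y) ∂μ) ^ 2
              * log ((Real.sqrt (φ x) - ∫ y, Real.sqrt (φ y) ∂μ) ^ 2) ∂μ)
          - (∫ x, (Real.sqrt (φ x) - ∫ y, Real.sqrt (φ y) ∂μ) ^ 2 ∂μ)
              * log (∫ x, (Real.sqrt (φ x) - ∫ y, Real.sqrt (φ y) ∂μ) ^ 2 ∂μ))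
        + 2 * ∫ x, (Real.sqrt (φ x) - ∫ y, Real.sqrt (φ y) ∂μ) ^ 2 ∂μ := by
  have hφm : AEStronglyMeasurable φ μ :=
    (continuous_sqrt.comp_aestronglyMeasurable hφ2.aestronglyMeasurable).congr
      (ae_of_all _ fun x => sqrt_sq (hφ0 x))
  have hfm : AEStronglyMeasurable (fun x => √(φ x)) μ :=
    continuous_sqrt.comp_aestronglyMeasurable hφm
  have h := entropy_sq_le_entropy_sq_sub_integral_add_two_mul_variance μ
    (fun x => sqrt_nonneg (φ x)) hfm
    (by simpa only [sq_sqrt (hφ0 _)] using (memLp_two_iff_integrable_sq hφm).2 hφ2)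
  rw [variance_eq_integral hfm.aemeasurable] at h
  simpa only [entropy, sq_sqrt (hφ0 _)] using h

/-- Rothaus' inequality: for a probability measure `μ` and nonnegative measurable `φ`
with `μ[φ²] < ∞`, setting `φ̃ = (√φ - μ[√φ])²`,
`H(φ|μ) ≤ H(φ̃|μ) + 2 μ[(√φ - μ[√φ])²]`. -/
theorem stmt1 {X : Type*} [MeasurableSpace X]
    (μ : Measure X) [IsProbabilityMeasure μ]
    (φ : X → ℝ) (hφm : Measurable φ) (hφ0 : ∀ x, 0 ≤ φ x)
    (hφ2 : Integrable (fun x => (φ x) ^ 2) μ) :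
    (∫ x, φ x * log (φ x) ∂μ) - (∫ x, φ x ∂μ) * log (∫ x, φ x ∂μ)
      ≤ ((∫ x, (Real.sqrt (φ x) - ∫ y, Real.sqrt (φ y) ∂μ) ^ 2
              * log ((Real.sqrt (φ x) - ∫ y, Real.sqrt (φ y) ∂μ) ^ 2) ∂μ)
          - (∫ x, (Real.sqrt (φ x) - ∫ y, Real.sqrt (φ y) ∂μ) ^ 2 ∂μ)
              * log (∫ x, (Real.sqrt (φ x) - ∫ y, Real.sqrt (φ y) ∂μ) ^ 2 ∂μ))
        + 2 * ∫ x, (Real.sqrt (φ x) - ∫ y, Real.sqrt (φ y) ∂μ) ^ 2 ∂μ :=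
  stmt1_general μ φ hφ0 hφ2
end

section
/- Let X ≥ 0 be a random variable and g : ℝ₊ → ℝ₊ a function such that E[e^{tX}] ≤ e^{t g(t) E[X]} for all t ≥ 0. Then for all t ≥ 0, E[e^{t√X}] ≤ exp(t √(g(2t) + g(t)) √(E[X])) + e^t. -/
open MeasureTheory Real

/-!
Split according to whether `√X` is below `s = √((g(2t) + g(t)) E[X])`. Below it, `e^{t√X} ≤ e^{ts}`.
Above it, `X ≥ a + b` with `a = g(2t) E[X]` and `b = g(t) E[X]`, which makes `√X ≤ (1 + X)/2` small
enough that `e^{t√X} ≤ e^t · exp(½(2t(X - a) + t(X - b)))`; by convexity of `exp` this is at most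
`(e^t / 2) (e^{2t(X - a)} + e^{t(X - b)})`, and the hypothesis at `2t` and at `t` bounds the
expectation of each of these two exponentials by `1`.
-/

lemma exp_add_div_two_le (A B : ℝ) : exp ((A + B) / 2) ≤ (exp A + exp B) / 2 := by
  have h := convexOn_exp.2 (Set.mem_univ A) (Set.mem_univ B) (by norm_num : (0 : ℝ) ≤ 1 / 2)
    (by norm_num : (0 : ℝ) ≤ 1 / 2) (by norm_num)
  simp only [smul_eq_mul] at h
  calc exp ((A + B) / 2) = exp (1 / 2 * A + 1 / 2 * B) := by ring_nf
    _ ≤ 1 / 2 * exp A + 1 / 2 * exp B := h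
    _ = (exp A + exp B) / 2 := by ring

lemma sqrt_le_one_add_of_add_le {x a b : ℝ} (hx : 0 ≤ x) (hb : 0 ≤ b) (hab : a + b ≤ x) :
    √x ≤ 1 + (2 * (x - a) + (x - b)) / 2 := by
  have two_sqrt_le : 2 * √x ≤ 1 + x := by
    nlinarith [sq_sqrt hx, sq_nonneg (√x - 1)]
  linarith

lemma exp_mul_sqrt_le {t x a b : ℝ} (ht : 0 ≤ t) (hx : 0 ≤ x) (hb : 0 ≤ b) :
    exp (t * √x) ≤
      exp (t * √(a + b)) + exp t / 2 * (exp (2 * t * (x - a)) + exp (t * (x - b))) := by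
  rcases le_or_gt (√x) (√(a + b)) with hle | hlt
  · have : exp (t * √x) ≤ exp (t * √(a + b)) := exp_le_exp.2 (mul_le_mul_of_nonneg_left hle ht)
    have : 0 ≤ exp t / 2 * (exp (2 * t * (x - a)) + exp (t * (x - b))) := by positivity
    linarith
  · have hab : a + b < x := (sqrt_lt_sqrt_iff_of_pos (sqrt_pos.1 ((sqrt_nonneg _).trans_lt hlt))).1 hlt
    have hexp : t * √x ≤ t + (2 * t * (x - a) + t * (x - b)) / 2 := by
      have := mul_le_mul_of_nonneg_left (sqrt_le_one_add_of_add_le hx hb hab.le) ht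
      linarith
    calc exp (t * √x)
        ≤ exp t * exp ((2 * t * (x - a) + t * (x - b)) / 2) := by
          rw [← exp_add]; exact exp_le_exp.2 hexp
      _ ≤ exp t * ((exp (2 * t * (x - a)) + exp (t * (x - b))) / 2) := by
          gcongr; exact exp_add_div_two_le _ _
      _ ≤ _ := by
          have : 0 ≤ exp (t * √(a + b)) := (exp_pos _).le
          linarith

section Integrals

variable {Ω : Type*} [MeasurableSpace Ω] {μ : Measure Ω} {X : Ω → ℝ}

lemma exp_mul_sub_eq (s x c : ℝ) : exp (s * (x - c)) = exp (s * x) * exp (-(s * c)) := by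
  rw [← exp_add]; ring_nf

lemma integrable_exp_mul_sub {s : ℝ} (h : Integrable (fun ω => exp (s * X ω)) μ) (c : ℝ) :
    Integrable (fun ω => exp (s * (X ω - c))) μ := by
  simpa only [exp_mul_sub_eq] using h.mul_const (exp (-(s * c)))

lemma integral_exp_mul_sub_le_one {s c : ℝ} (h : ∫ ω, exp (s * X ω) ∂μ ≤ exp (s * c)) :
    ∫ ω, exp (s * (X ω - c)) ∂μ ≤ 1 := by
  simp only [exp_mul_sub_eq, integral_mul_const]
  calc (∫ ω, exp (s * X ω) ∂μ) * exp (-(s * c)) ≤ exp (s * c) * exp (-(s * c)) := by gcongr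
    _ = 1 := by rw [← exp_add, add_neg_cancel, exp_zero]

lemma integral_exp_mul_sqrt_le [IsProbabilityMeasure μ] (hX0 : ∀ ω, 0 ≤ X ω)
    {t a b : ℝ} (ht : 0 ≤ t) (hb : 0 ≤ b)
    (hia : Integrable (fun ω => exp (2 * t * (X ω - a))) μ)
    (hib : Integrable (fun ω => exp (t * (X ω - b))) μ)
    (ha1 : ∫ ω, exp (2 * t * (X ω - a)) ∂μ ≤ 1) (hb1 : ∫ ω, exp (t * (X ω - b)) ∂μ ≤ 1) :
    ∫ ω, exp (t * √(X ω)) ∂μ ≤ exp (t * √(a + b)) + exp t := by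
  have hi : Integrable
      (fun ω => exp t / 2 * (exp (2 * t * (X ω - a)) + exp (t * (X ω - b)))) μ :=
    (hia.add hib).const_mul _
  calc ∫ ω, exp (t * √(X ω)) ∂μ
      ≤ ∫ ω, exp (t * √(a + b)) +
          exp t / 2 * (exp (2 * t * (X ω - a)) + exp (t * (X ω - b))) ∂μ :=
        integral_mono_of_nonneg (.of_forall fun ω => (exp_pos _).le)
          ((integrable_const _).add hi)
          (.of_forall fun ω => exp_mul_sqrt_le ht (hX0 ω) hb)
    _ = exp (t * √(a + b)) +
          exp t / 2 * (∫ ω, exp (2 * t * (X ω - a)) ∂μ + ∫ ω, exp (t * (X ω - b)) ∂μ) := by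
        rw [integral_add (integrable_const _) hi, integral_const_mul,
          integral_add hia hib, integral_const, probReal_univ, one_smul]
    _ ≤ exp (t * √(a + b)) + exp t / 2 * (1 + 1) := by gcongr
    _ = exp (t * √(a + b)) + exp t := by ring

end Integrals

theorem stmt6_general {Ω : Type*} [MeasurableSpace Ω]
    (μ : Measure Ω) [IsProbabilityMeasure μ]
    (X : Ω → ℝ) (hX0 : ∀ ω, 0 ≤ X ω)
    (g : ℝ → ℝ) (hg0 : ∀ t, 0 ≤ t → 0 ≤ g t)
    (hint : ∀ t : ℝ, 0 ≤ t → Integrable (fun ω => exp (t * X ω)) μ)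
    (hbound : ∀ t : ℝ, 0 ≤ t →
      (∫ ω, exp (t * X ω) ∂μ) ≤ exp (t * g t * ∫ ω, X ω ∂μ)) :
    ∀ t : ℝ, 0 ≤ t →
      (∫ ω, exp (t * Real.sqrt (X ω)) ∂μ)
        ≤ exp (t * Real.sqrt (g (2 * t) + g t) * Real.sqrt (∫ ω, X ω ∂μ)) + exp t := by
  intro t ht
  have h2t : 0 ≤ 2 * t := by linarith
  set m := ∫ ω, X ω ∂μ
  have hm : 0 ≤ m := integral_nonneg hX0
  have hsqrt : √(g (2 * t) + g t) * √m = √(g (2 * t) * m + g t * m) := by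
    rw [← add_mul, sqrt_mul (add_nonneg (hg0 _ h2t) (hg0 _ ht))]
  rw [mul_assoc, hsqrt]
  refine integral_exp_mul_sqrt_le hX0 ht (mul_nonneg (hg0 _ ht) hm)
    (integrable_exp_mul_sub (hint _ h2t) _) (integrable_exp_mul_sub (hint _ ht) _)
    (integral_exp_mul_sub_le_one ?_) (integral_exp_mul_sub_le_one ?_)
  · simpa only [mul_assoc] using hbound _ h2t
  · simpa only [mul_assoc] using hbound _ ht

/-- Exponential moment bound for `√X`: if `X ≥ 0` and
`E[e^{tX}] ≤ e^{t g(t) E[X]}` for all `t ≥ 0`, then for all `t ≥ 0`,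
`E[e^{t√X}] ≤ exp(t √(g(2t)+g(t)) √(E[X])) + e^t`. -/
theorem stmt6 {Ω : Type*} [MeasurableSpace Ω]
    (μ : Measure Ω) [IsProbabilityMeasure μ]
    (X : Ω → ℝ) (hXm : Measurable X) (hX0 : ∀ ω, 0 ≤ X ω) (hXi : Integrable X μ)
    (g : ℝ → ℝ) (hg0 : ∀ t, 0 ≤ t → 0 ≤ g t)
    (hint : ∀ t : ℝ, 0 ≤ t → Integrable (fun ω => exp (t * X ω)) μ)
    (hbound : ∀ t : ℝ, 0 ≤ t →
      (∫ ω, exp (t * X ω) ∂μ) ≤ exp (t * g t * ∫ ω, X ω ∂μ)) :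
    ∀ t : ℝ, 0 ≤ t →
      (∫ ω, exp (t * Real.sqrt (X ω)) ∂μ)
        ≤ exp (t * Real.sqrt (g (2 * t) + g t) * Real.sqrt (∫ ω, X ω ∂μ)) + exp t :=
  stmt6_general μ X hX0 g hg0 hint hbound
end

section
/- Let c : ℕ → ℝ be a homogeneous zero range rate with c(0)=0, c(k)>0 for k ≥ 1, satisfying sup_k |c(k+1)−c(k)| ≤ a₁ and inf_k (c(k+k₀)−c(k)) ≥ a₂ > 0. For each fixed m ∈ ℕ define the colour-conditioned rate c_m(k) = k·c(k+m)/(k+m) (with c_m(0)=0). Then the family {c_m} satisfies uniform Lipschitz growth: sup_{m,k} |c_m(k+1) − c_m(k)| < ∞. -/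
/-- The colour-conditioned rates `c_m(k) = k·c(k+m)/(k+m)` of a homogeneous zero range
rate satisfying (LG) and (M) have uniformly bounded Lipschitz constant:
`sup_{m,k} |c_m(k+1) - c_m(k)| < ∞`. -/
theorem stmt9 (c : ℕ → ℝ) (a₁ a₂ : ℝ) (k₀ : ℕ)
    (h0 : c 0 = 0) (hpos : ∀ k, 1 ≤ k → 0 < c k)
    (hLG : ∀ k, |c (k + 1) - c k| ≤ a₁)
    (ha₂ : 0 < a₂) (hM : ∀ k, a₂ ≤ c (k + k₀) - c k) :
    ∃ C : ℝ, ∀ m k : ℕ,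
      |((k : ℝ) + 1) * c (k + 1 + m) / ((k : ℝ) + 1 + m)
        - (k : ℝ) * c (k + m) / ((k : ℝ) + m)| ≤ C := by
  have ha1 : 0 ≤ a₁ := le_trans (abs_nonneg _) (hLG 0)
  have hcb : ∀ n : ℕ, |c n| ≤ n * a₁ := by
    intro n
    induction n with
    | zero => simp [h0]
    | succ n ih =>
      have h1 : |c (n + 1)| ≤ |c (n + 1) - c n| + |c n| := by
        calc |c (n + 1)| = |(c (n + 1) - c n) + c n| := by ring_nf
        _ ≤ |c (n + 1) - c n| + |c n| := abs_add_le _ _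
      have := hLG n
      push_cast
      linarith
  refine ⟨2 * a₁, fun m k => ?_⟩
  rcases Nat.eq_zero_or_pos k with rfl | hk
  · simp only [Nat.cast_zero, zero_add, zero_mul, zero_div, sub_zero, one_mul]
    have hd : (0 : ℝ) < 1 + m := by positivity
    rw [abs_div, abs_of_pos hd, div_le_iff₀ hd]
    have := hcb (1 + m)
    push_cast at this
    nlinarith
  set K := (k : ℝ) with hKdef
  set M := (m : ℝ) with hMdef
  have hK : 1 ≤ K := by rw [hKdef]; exact_mod_cast hk
  have hM : 0 ≤ M := Nat.cast_nonneg m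
  have hd1 : (0 : ℝ) < K + 1 + M := by linarith
  have hd2 : (0 : ℝ) < K + M := by linarith
  have key : (K + 1) * c (k + 1 + m) / (K + 1 + M) - K * c (k + m) / (K + M)
      = (K + 1) * (c (k + 1 + m) - c (k + m)) / (K + 1 + M)
        + M * c (k + m) / ((K + 1 + M) * (K + M)) := by
    field_simp
    ring
  rw [key]
  have hdiff : |c (k + 1 + m) - c (k + m)| ≤ a₁ := by
    have := hLG (k + m)
    have he : k + 1 + m = k + m + 1 := by omega
    rw [he]; exact this
  have h1 : |(K + 1) * (c (k + 1 + m) - c (k + m)) / (K + 1 + M)| ≤ a₁ := by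
    rw [abs_div, abs_of_pos hd1, div_le_iff₀ hd1, abs_mul, abs_of_pos (by linarith : (0:ℝ) < K + 1)]
    nlinarith [abs_nonneg (c (k + 1 + m) - c (k + m))]
  have h2 : |M * c (k + m) / ((K + 1 + M) * (K + M))| ≤ a₁ := by
    have hd3 : (0 : ℝ) < (K + 1 + M) * (K + M) := mul_pos hd1 hd2
    rw [abs_div, abs_of_pos hd3, div_le_iff₀ hd3, abs_mul, abs_of_nonneg hM]
    have hc := hcb (k + m)
    push_cast at hc
    nlinarith [abs_nonneg (c (k + m))]
  calc |(K + 1) * (c (k + 1 + m) - c (k + m)) / (K + 1 + M)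
        + M * c (k + m) / ((K + 1 + M) * (K + M))|
      ≤ |(K + 1) * (c (k + 1 + m) - c (k + m)) / (K + 1 + M)|
        + |M * c (k + m) / ((K + 1 + M) * (K + M))| := abs_add_le _ _
    _ ≤ 2 * a₁ := by linarith
end

section
/- Let h : [0,∞) → (0,∞) be differentiable with h(0)=1 and suppose t h'(t) − h(t) log h(t) ≤ a φ t² e^{a t} h(t) for all t ∈ [0,T], where a, φ > 0, and lim_{t→0⁺} (log h(t))/t = φ. Then h(t) ≤ exp(φ t e^{a t}) for all t ∈ [0,T]. -/
/-- ODE comparison argument: if `h(0)=1`, `h > 0`,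
`t h'(t) - h(t) log h(t) ≤ a φ t² e^{a t} h(t)` on `[0,T]` and
`(log h(t))/t → φ` as `t → 0⁺`, then `h(t) ≤ exp(φ t e^{a t})` on `[0,T]`. -/
theorem stmt12 (h h' : ℝ → ℝ) (a φ T : ℝ) (ha : 0 < a) (hφ : 0 < φ) (hT : 0 < T)
    (hderiv : ∀ t ∈ Set.Icc (0 : ℝ) T, HasDerivAt h (h' t) t)
    (hpos : ∀ t ∈ Set.Icc (0 : ℝ) T, 0 < h t)
    (h1 : h 0 = 1)
    (hineq : ∀ t ∈ Set.Icc (0 : ℝ) T,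
      t * h' t - h t * Real.log (h t) ≤ a * φ * t ^ 2 * Real.exp (a * t) * h t)
    (hlim : Filter.Tendsto (fun t => Real.log (h t) / t)
      (nhdsWithin 0 (Set.Ioi 0)) (nhds φ)) :
    ∀ t ∈ Set.Icc (0 : ℝ) T, h t ≤ Real.exp (φ * t * Real.exp (a * t)) := by
  intro t ht
  rcases eq_or_lt_of_le ht.1 with rfl | ht0
  · simp [h1]
  -- G s = φ e^{a s} - log h s / s
  set G : ℝ → ℝ := fun s => φ * Real.exp (a * s) - Real.log (h s) / s with hG
  -- derivative of G on (0, T]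
  have hGderiv : ∀ s ∈ Set.Ioc (0 : ℝ) T,
      HasDerivAt G (φ * (Real.exp (a * s) * a)
        - (h' s / h s * s - Real.log (h s) * 1) / s ^ 2) s := by
    intro s hs
    have hsIcc : s ∈ Set.Icc (0 : ℝ) T := ⟨hs.1.le, hs.2⟩
    have hax : HasDerivAt (fun x => a * x) a s := by
      simpa using (hasDerivAt_id s).const_mul a
    have h1' : HasDerivAt (fun x => φ * Real.exp (a * x)) (φ * (Real.exp (a * s) * a)) s :=
      hax.exp.const_mul φ
    have h2' : HasDerivAt (fun x => Real.log (h x) / x)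
        ((h' s / h s * s - Real.log (h s) * 1) / s ^ 2) s :=
      ((hderiv s hsIcc).log (hpos s hsIcc).ne').div (hasDerivAt_id s) hs.1.ne'
    exact h1'.sub h2'
  -- derivative is nonneg
  have hGnonneg : ∀ s ∈ Set.Ioc (0 : ℝ) T,
      0 ≤ φ * (Real.exp (a * s) * a) - (h' s / h s * s - Real.log (h s) * 1) / s ^ 2 := by
    intro s hs
    have hsIcc : s ∈ Set.Icc (0 : ℝ) T := ⟨hs.1.le, hs.2⟩
    have hh := hpos s hsIcc
    have hi := hineq s hsIcc
    have hs0 := hs.1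
    rw [sub_nonneg, div_le_iff₀ (by positivity)]
    have : h' s / h s * s - Real.log (h s) * 1 = (s * h' s - h s * Real.log (h s)) / h s := by
      field_simp
    rw [this, div_le_iff₀ hh]
    nlinarith [hi, Real.exp_pos (a * s)]
  -- monotone on [s, t] for 0 < s ≤ t
  have hmono : ∀ s, 0 < s → s < t → G s ≤ G t := by
    intro s hs0 hst
    have hsub : Set.Icc s t ⊆ Set.Ioc (0 : ℝ) T := fun x hx =>
      ⟨lt_of_lt_of_le hs0 hx.1, le_trans hx.2 ht.2⟩
    have hcont : ContinuousOn G (Set.Icc s t) := fun x hx =>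
      (hGderiv x (hsub hx)).continuousAt.continuousWithinAt
    have := monotoneOn_of_hasDerivWithinAt_nonneg (convex_Icc s t) hcont
      (f' := fun x => φ * (Real.exp (a * x) * a)
        - (h' x / h x * x - Real.log (h x) * 1) / x ^ 2)
      (fun x hx => (hGderiv x (hsub (interior_subset hx))).hasDerivWithinAt)
      (fun x hx => hGnonneg x (hsub (interior_subset hx)))
    exact this (Set.left_mem_Icc.2 hst.le) (Set.right_mem_Icc.2 hst.le) hst.le
  -- G → 0 at 0+
  have htend : Filter.Tendsto G (nhdsWithin 0 (Set.Ioi 0)) (nhds 0) := by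
    have h1' : Filter.Tendsto (fun s => φ * Real.exp (a * s))
        (nhdsWithin 0 (Set.Ioi 0)) (nhds (φ * Real.exp (a * 0))) :=
      (continuous_const.mul (Real.continuous_exp.comp
        (continuous_const.mul continuous_id))).continuousAt.continuousWithinAt.tendsto
    have := h1'.sub hlim
    simpa using this
  -- eventually G s ≤ G t
  have hev : ∀ᶠ s in nhdsWithin 0 (Set.Ioi 0), G s ≤ G t := by
    filter_upwards [Ioo_mem_nhdsGT_of_mem (Set.mem_Ico.2 ⟨le_refl 0, ht0⟩)] with s hs
    exact hmono s hs.1 hs.2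
  have h0le : (0 : ℝ) ≤ G t := le_of_tendsto htend hev
  -- conclude
  have hlog : Real.log (h t) ≤ φ * t * Real.exp (a * t) := by
    have : Real.log (h t) / t ≤ φ * Real.exp (a * t) := by
      have := h0le; simp only [hG, sub_nonneg] at this; linarith
    calc Real.log (h t) = Real.log (h t) / t * t := by field_simp
      _ ≤ φ * Real.exp (a * t) * t := mul_le_mul_of_nonneg_right this ht0.le
      _ = φ * t * Real.exp (a * t) := by ring
  calc h t = Real.exp (Real.log (h t)) := (Real.exp_log (hpos t ht)).symm
    _ ≤ _ := Real.exp_le_exp.2 hlog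
end

section
/- Let μ, ν be probability measures on a countable space, f ≥ 0 with μ[f] < ∞, and g a bounded function. Then for every s > 0: |μ[f; g]| ≤ (μ[f]/s) · log( max( μ[e^{s(g−μ[g])}], μ[e^{−s(g−μ[g])}] ) ) + (1/s) H(f|μ), where μ[f;g] = μ[fg] − μ[f]μ[g] and H(f|μ) = μ[f log f] − μ[f] log μ[f]. -/
/-!
Young's inequality `a t ≤ a log a - a + eᵗ` for the Legendre pair `(a log a - a, eᵗ)`, applied
pointwise with `t = h + log (μ[f] / μ[e^h])` and integrated, gives the variational bound
`μ[f h] ≤ μ[f] log μ[e^h] + H(f|μ)`. Taking `h = ±s (g - μ[g])` bounds `± s μ[f; g]`.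
-/

open MeasureTheory Real

lemma mul_le_mul_log_sub_add_exp {a : ℝ} (ha : 0 ≤ a) (t : ℝ) :
    a * t ≤ a * log a - a + exp t := by
  rcases ha.eq_or_lt with rfl | ha
  · simp [(exp_pos t).le]
  · have hexp : a * exp (t - log a) = exp t := by
      rw [exp_sub, exp_log ha]
      field_simp
    nlinarith [mul_le_mul_of_nonneg_left (add_one_le_exp (t - log a)) ha.le]

section

variable {X : Type*} [MeasurableSpace X] {μ : Measure X}

/-- The relative entropy `H(f|μ)`. -/
noncomputable def funEntropy (μ : Measure X) (f : X → ℝ) : ℝ :=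
  (∫ x, f x * log (f x) ∂μ) - (∫ x, f x ∂μ) * log (∫ x, f x ∂μ)

lemma integral_mul_le_log_integral_exp_add_funEntropy {f h : X → ℝ} (hf0 : 0 ≤ᵐ[μ] f)
    (hfi : Integrable f μ) (hfl : Integrable (fun x => f x * log (f x)) μ)
    (hfh : Integrable (fun x => f x * h x) μ) (hexp : Integrable (fun x => exp (h x)) μ) :
    ∫ x, f x * h x ∂μ ≤ (∫ x, f x ∂μ) * log (∫ x, exp (h x) ∂μ) + funEntropy μ f := by
  unfold funEntropy
  rcases (integral_nonneg_of_ae hf0).eq_or_lt with hm | hm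
  · have hf : f =ᵐ[μ] 0 := (integral_eq_zero_iff_of_nonneg_ae hf0 hfi).mp hm.symm
    have hfh0 : ∫ x, f x * h x ∂μ = 0 :=
      integral_eq_zero_of_ae (hf.mono fun x hx => by simp [hx])
    have hfl0 : ∫ x, f x * log (f x) ∂μ = 0 :=
      integral_eq_zero_of_ae (hf.mono fun x hx => by simp [hx])
    rw [hfh0, hfl0, ← hm]
    simp
  · set m := ∫ x, f x ∂μ
    set Z := ∫ x, exp (h x) ∂μ
    have : NeZero μ := ⟨fun h0 => by simp [m, h0] at hm⟩
    have hZ : 0 < Z := integral_exp_pos hexp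
    -- the shift `K` makes `μ[e^(h + K)] = μ[f]`, so the `- f` and `e^(h + K)` terms cancel
    set K := log m - log Z
    have hexpK : Integrable (fun x => exp (h x + K)) μ := by
      simpa only [exp_add] using hexp.mul_const (exp K)
    have hyoung : ∫ x, f x * (h x + K) ∂μ ≤ ∫ x, (f x * log (f x) - f x + exp (h x + K)) ∂μ :=
      integral_mono_ae (by simp only [mul_add]; exact hfh.add (hfi.mul_const K))
        ((hfl.sub hfi).add hexpK)
        (hf0.mono fun x hx => mul_le_mul_log_sub_add_exp hx _)
    have hlhs : ∫ x, f x * (h x + K) ∂μ = (∫ x, f x * h x ∂μ) + m * K := by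
      simp only [mul_add]
      rw [integral_add hfh (hfi.mul_const K), integral_mul_const]
    have hexpK_eq : ∫ x, exp (h x + K) ∂μ = m := by
      simp only [exp_add]
      rw [integral_mul_const, exp_sub, exp_log hm, exp_log hZ]
      exact mul_div_cancel₀ _ hZ.ne'
    rw [hlhs, integral_add (f := fun x => f x * log (f x) - f x) (hfl.sub hfi) hexpK,
      integral_sub hfl hfi, hexpK_eq] at hyoung
    linarith

variable [IsFiniteMeasure μ] {f g : X → ℝ}

lemma integrable_exp_of_abs_le {h : X → ℝ} (hh : AEStronglyMeasurable h μ) {C : ℝ}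
    (hC : ∀ᵐ x ∂μ, |h x| ≤ C) : Integrable (fun x => exp (h x)) μ :=
  .of_bound (continuous_exp.comp_aestronglyMeasurable hh) (exp C) <|
    hC.mono fun x hx => by
      rw [norm_of_nonneg (exp_pos _).le]
      exact exp_le_exp.mpr (abs_le.mp hx).2

lemma integrable_exp_mul_sub_integral (hg : AEStronglyMeasurable g μ) {M : ℝ}
    (hgb : ∀ᵐ x ∂μ, |g x| ≤ M) (ε : ℝ) :
    Integrable (fun x => exp (ε * (g x - ∫ y, g y ∂μ))) μ :=
  integrable_exp_of_abs_le ((hg.sub aestronglyMeasurable_const).const_mul ε)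
    (C := |ε| * (M + |∫ y, g y ∂μ|)) <| hgb.mono fun x hx => by
      rw [abs_mul]
      exact mul_le_mul_of_nonneg_left ((abs_sub _ _).trans (by linarith)) (abs_nonneg ε)

lemma mul_covariance_le_log_integral_exp_add_funEntropy (hf0 : 0 ≤ᵐ[μ] f)
    (hfi : Integrable f μ) (hfl : Integrable (fun x => f x * log (f x)) μ)
    (hg : AEStronglyMeasurable g μ) {M : ℝ} (hgb : ∀ᵐ x ∂μ, |g x| ≤ M) (ε : ℝ) :
    ε * ((∫ x, f x * g x ∂μ) - (∫ x, f x ∂μ) * ∫ x, g x ∂μ)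
      ≤ (∫ x, f x ∂μ) * log (∫ x, exp (ε * (g x - ∫ y, g y ∂μ)) ∂μ) + funEntropy μ f := by
  set c := ∫ y, g y ∂μ
  have hfg : Integrable (fun x => f x * g x) μ :=
    hfi.mul_bdd hg (c := M) (by simpa only [norm_eq_abs] using hgb)
  have hpt : (fun x => f x * (ε * (g x - c))) = fun x => ε * (f x * g x - f x * c) := by
    ext x; ring
  have hfh : Integrable (fun x => f x * (ε * (g x - c))) μ := by
    rw [hpt]
    exact (hfg.sub (hfi.mul_const c)).const_mul ε
  have hfh_eq : ∫ x, f x * (ε * (g x - c)) ∂μ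
      = ε * ((∫ x, f x * g x ∂μ) - (∫ x, f x ∂μ) * c) := by
    rw [hpt, integral_const_mul, integral_sub hfg (hfi.mul_const c), integral_mul_const]
  rw [← hfh_eq]
  exact integral_mul_le_log_integral_exp_add_funEntropy hf0 hfi hfl hfh
    (integrable_exp_mul_sub_integral hg hgb ε)

theorem abs_covariance_le [NeZero μ] (hf0 : 0 ≤ᵐ[μ] f) (hfi : Integrable f μ)
    (hfl : Integrable (fun x => f x * log (f x)) μ) (hg : AEStronglyMeasurable g μ) {M : ℝ}
    (hgb : ∀ᵐ x ∂μ, |g x| ≤ M) {s : ℝ} (hs : 0 < s) :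
    |(∫ x, f x * g x ∂μ) - (∫ x, f x ∂μ) * ∫ x, g x ∂μ|
      ≤ (∫ x, f x ∂μ) / s *
          log (max (∫ x, exp (s * (g x - ∫ y, g y ∂μ)) ∂μ)
                   (∫ x, exp (-s * (g x - ∫ y, g y ∂μ)) ∂μ))
        + (1 / s) * funEntropy μ f := by
  have hm : 0 ≤ ∫ x, f x ∂μ := integral_nonneg_of_ae hf0
  have hbound (ε : ℝ) := mul_covariance_le_log_integral_exp_add_funEntropy hf0 hfi hfl hg hgb ε
  set A := ∫ x, exp (s * (g x - ∫ y, g y ∂μ)) ∂μ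
  set B := ∫ x, exp (-s * (g x - ∫ y, g y ∂μ)) ∂μ
  have hA : (∫ x, f x ∂μ) * log A ≤ (∫ x, f x ∂μ) * log (max A B) := mul_le_mul_of_nonneg_left
    (log_le_log (integral_exp_pos (integrable_exp_mul_sub_integral hg hgb s)) (le_max_left A B)) hm
  have hB : (∫ x, f x ∂μ) * log B ≤ (∫ x, f x ∂μ) * log (max A B) := mul_le_mul_of_nonneg_left
    (log_le_log (integral_exp_pos (integrable_exp_mul_sub_integral hg hgb (-s)))
      (le_max_right A B)) hm
  set D := (∫ x, f x * g x ∂μ) - (∫ x, f x ∂μ) * ∫ x, g x ∂μ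
  have hsD : s * |D| ≤ (∫ x, f x ∂μ) * log (max A B) + funEntropy μ f := by
    rcases abs_cases D with ⟨hD, -⟩ | ⟨hD, -⟩ <;> rw [hD] <;> linarith [hbound s, hbound (-s)]
  calc |D| = s * |D| / s := by field_simp
    _ ≤ ((∫ x, f x ∂μ) * log (max A B) + funEntropy μ f) / s := by gcongr
    _ = _ := by ring

end

theorem stmt13_general {X : Type*} [MeasurableSpace X]
    (μ : Measure X) [IsProbabilityMeasure μ]
    (f g : X → ℝ) (hf0 : ∀ x, 0 ≤ f x)
    (hfi : Integrable f μ)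
    (hfl : Integrable (fun x => f x * log (f x)) μ)
    (hgm : Measurable g) (M : ℝ) (hgb : ∀ x, |g x| ≤ M)
    (s : ℝ) (hs : 0 < s) :
    |(∫ x, f x * g x ∂μ) - (∫ x, f x ∂μ) * ∫ x, g x ∂μ|
      ≤ (∫ x, f x ∂μ) / s *
          log (max (∫ x, exp (s * (g x - ∫ y, g y ∂μ)) ∂μ)
                   (∫ x, exp (-s * (g x - ∫ y, g y ∂μ)) ∂μ))
        + (1 / s) * ((∫ x, f x * log (f x) ∂μ)
            - (∫ x, f x ∂μ) * log (∫ x, f x ∂μ)) :=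
  abs_covariance_le (Filter.Eventually.of_forall hf0) hfi hfl hgm.aestronglyMeasurable
    (Filter.Eventually.of_forall hgb) hs

/-- Entropy inequality for covariances: for a probability measure `μ` on a countable
space, `f ≥ 0` integrable, bounded measurable `g` and `s > 0`,
`|μ[f;g]| ≤ (μ[f]/s) log(max(μ[e^{s(g-μ[g])}], μ[e^{-s(g-μ[g])}])) + H(f|μ)/s`. -/
theorem stmt13 {X : Type*} [MeasurableSpace X] [MeasurableSingletonClass X] [Countable X]
    (μ : Measure X) [IsProbabilityMeasure μ]
    (f g : X → ℝ) (hf0 : ∀ x, 0 ≤ f x)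
    (hfi : Integrable f μ)
    (hfl : Integrable (fun x => f x * log (f x)) μ)
    (hgm : Measurable g) (M : ℝ) (hgb : ∀ x, |g x| ≤ M)
    (s : ℝ) (hs : 0 < s) :
    |(∫ x, f x * g x ∂μ) - (∫ x, f x ∂μ) * ∫ x, g x ∂μ|
      ≤ (∫ x, f x ∂μ) / s *
          log (max (∫ x, exp (s * (g x - ∫ y, g y ∂μ)) ∂μ)
                   (∫ x, exp (-s * (g x - ∫ y, g y ∂μ)) ∂μ))
        + (1 / s) * ((∫ x, f x * log (f x) ∂μ)
            - (∫ x, f x ∂μ) * log (∫ x, f x ∂μ)) :=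
  stmt13_general μ f g hf0 hfi hfl hgm M hgb s hs
end
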